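/- If every substring in a partition of a string S' into k blocks, each of which is either a single character or a non-first occurrence (occurs earlier in S'), then the LZ77 parse of S' has at most 2k phrases. -/

import Mathlib

/-- `P` occurs in `S` starting at (0-indexed) position `i`. -/
def occursAt {α : Type*} (S P : List α) (i : ℕ) : Prop :=
  i + P.length ≤ S.length ∧ (S.drop i).take P.length = P

/-- Position in `S` where the `t`-th phrase of the parse `bs` begins
(equivalently, where the `(t-1)`-st phrase ends). -/
def phraseEnd {α : Type*} (bs : List (List α)) (t : ℕ) : ℕ :=
  ((bs.take t).flatten).length

/-- `bs` is the (greedy, non-self-referential) LZ77 parse of `S`: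
the phrases concatenate to `S`, each phrase is nonempty, each phrase minus its
last character has an occurrence ending at or before the phrase's start
(or the phrase is a single character), and greediness: unless the phrase reaches
the end of `S`, the whole phrase has no occurrence ending at or before its start. -/
def LZ77Parse {α : Type*} (S : List α) (bs : List (List α)) : Prop :=
  bs.flatten = S ∧ (∀ b ∈ bs, b ≠ []) ∧
  ∀ (t : ℕ) (ht : t < bs.length),
    ((bs.get ⟨t, ht⟩).length = 1 ∨
      ∃ j, occursAt S (bs.get ⟨t, ht⟩).dropLast j ∧
        j + (bs.get ⟨t, ht⟩).dropLast.length ≤ phraseEnd bs t ∧ j < phraseEnd bs t) ∧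
    (phraseEnd bs t + (bs.get ⟨t, ht⟩).length = S.length ∨
      ¬ ∃ j, occursAt S (bs.get ⟨t, ht⟩) j ∧
          j + (bs.get ⟨t, ht⟩).length ≤ phraseEnd bs t)

/-- An occurrence of a length-`m` pattern at position `i` is primary if it contains
the last position of some phrase, i.e. crosses a phrase boundary. -/
def PrimaryOcc {α : Type*} (bs : List (List α)) (i m : ℕ) : Prop :=
  ∃ t < bs.length, i < phraseEnd bs (t + 1) ∧ phraseEnd bs (t + 1) ≤ i + m

/-!
The greedy parse dominates any parse into blocks that are single characters or occur earlier:
by induction on `t`, its first `t` phrases cover at least the first `t` blocks. Indeed, a greedy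
phrase starting inside block `t` and ending before that block does would be a factor of the
block, hence would itself occur earlier, contradicting greediness. So the greedy parse has at
most `k` phrases.
-/

def OccursBefore {α : Type*} (S P : List α) (p : ℕ) : Prop :=
  ∃ j, occursAt S P j ∧ j + P.length ≤ p

theorem occursAt_iff_exists_append {α : Type*} {S P : List α} {i : ℕ} :
    occursAt S P i ↔ ∃ A B, S = A ++ P ++ B ∧ A.length = i := by
  constructor
  · rintro ⟨hlen, htake⟩
    refine ⟨S.take i, (S.drop i).drop P.length, ?_, by rw [List.length_take]; omega⟩
    conv_lhs => rw [← List.take_append_drop i S, ← List.take_append_drop P.length (S.drop i)]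
    rw [htake, List.append_assoc]
  · rintro ⟨A, B, rfl, rfl⟩
    simp [occursAt]

theorem OccursBefore.of_infix {α : Type*} {S P Q : List α} {p : ℕ} (hP : OccursBefore S P p)
    (hQ : Q <:+: P) : OccursBefore S Q p := by
  obtain ⟨j, hj, hjp⟩ := hP
  obtain ⟨s, t, rfl⟩ := hQ
  obtain ⟨A, B, rfl, rfl⟩ := occursAt_iff_exists_append.mp hj
  refine ⟨(A ++ s).length, occursAt_iff_exists_append.mpr ⟨A ++ s, t ++ B, by simp, rfl⟩, ?_⟩
  simp only [List.length_append] at hjp ⊢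
  omega

theorem OccursBefore.mono {α : Type*} {S P : List α} {p q : ℕ} (hP : OccursBefore S P p)
    (hpq : p ≤ q) : OccursBefore S P q :=
  let ⟨j, hj, hjp⟩ := hP
  ⟨j, hj, hjp.trans hpq⟩

theorem List.take_drop_infix_take_drop {α : Type*} (l : List α) {p q m n : ℕ} (hpq : p ≤ q)
    (hqm : q + m ≤ p + n) : (l.drop q).take m <:+: (l.drop p).take n := by
  have hsub : (l.drop q).take m = (((l.drop p).take n).drop (q - p)).take m := by
    rw [List.drop_take, List.take_take, List.drop_drop, Nat.add_sub_cancel' hpq,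
      Nat.min_eq_left (by omega)]
  rw [hsub]
  exact (List.take_prefix _ _).isInfix.trans (List.drop_suffix _ _).isInfix

theorem phraseEnd_succ {α : Type*} (bs : List (List α)) (t : ℕ) (ht : t < bs.length) :
    phraseEnd bs (t + 1) = phraseEnd bs t + (bs.get ⟨t, ht⟩).length := by
  rw [phraseEnd, phraseEnd, List.take_add_one, List.flatten_append, List.length_append]
  simp [List.getElem?_eq_getElem ht]

theorem phraseEnd_le_length_flatten {α : Type*} (bs : List (List α)) (t : ℕ) :
    phraseEnd bs t ≤ bs.flatten.length := by
  conv_rhs => rw [← List.take_append_drop t bs, List.flatten_append, List.length_append]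
  exact Nat.le_add_right _ _

theorem phraseEnd_of_length_le {α : Type*} {bs : List (List α)} {t : ℕ} (h : bs.length ≤ t) :
    phraseEnd bs t = bs.flatten.length := by
  rw [phraseEnd, List.take_of_length_le h]

theorem occursAt_phraseEnd {α : Type*} (bs : List (List α)) (t : ℕ) (ht : t < bs.length) :
    occursAt bs.flatten (bs.get ⟨t, ht⟩) (phraseEnd bs t) := by
  refine occursAt_iff_exists_append.mpr ⟨(bs.take t).flatten, (bs.drop (t + 1)).flatten, ?_, rfl⟩
  calc bs.flatten = (bs.take t ++ bs[t] :: bs.drop (t + 1)).flatten := by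
        rw [← List.drop_eq_getElem_cons ht, List.take_append_drop]
    _ = _ := by simp only [List.flatten_append, List.flatten_cons, List.append_assoc,
        List.get_eq_getElem]

namespace LZ77Parse

variable {α : Type*} {S : List α} {cs : List (List α)}

theorem flatten_eq (hcs : LZ77Parse S cs) : cs.flatten = S := hcs.1

theorem length_pos (hcs : LZ77Parse S cs) {t : ℕ} (ht : t < cs.length) :
    0 < (cs.get ⟨t, ht⟩).length :=
  List.length_pos_iff.mpr (hcs.2.1 _ (List.get_mem _ _))

theorem not_occursBefore (hcs : LZ77Parse S cs) {t : ℕ} (ht : t < cs.length)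
    (hend : phraseEnd cs (t + 1) < S.length) :
    ¬ OccursBefore S (cs.get ⟨t, ht⟩) (phraseEnd cs t) := by
  rw [phraseEnd_succ cs t ht] at hend
  exact (hcs.2.2 t ht).2.resolve_left hend.ne

theorem add_length_le_phraseEnd_succ (hcs : LZ77Parse S cs) {t : ℕ} (ht : t < cs.length)
    {b : List α} {p : ℕ} (hb : occursAt S b p) (hp : p ≤ phraseEnd cs t)
    (hblock : b.length = 1 ∨ OccursBefore S b p) : p + b.length ≤ phraseEnd cs (t + 1) := by
  have hpos := hcs.length_pos ht
  rw [phraseEnd_succ cs t ht]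
  by_contra! hlt
  rcases hblock with hone | hocc
  · omega
  · have hinfix : cs.get ⟨t, ht⟩ <:+: b := by
      have hc := (occursAt_phraseEnd cs t ht).2
      have hsub := List.take_drop_infix_take_drop S hp hlt.le
      rwa [← hcs.flatten_eq, hc, hcs.flatten_eq, hb.2] at hsub
    refine hcs.not_occursBefore ht ?_ ((hocc.of_infix hinfix).mono hp)
    rw [phraseEnd_succ cs t ht]
    have hbS := hb.1
    omega

theorem phraseEnd_le_phraseEnd (hcs : LZ77Parse S cs) {parts : List (List α)}
    (hjoin : parts.flatten = S)
    (hblocks : ∀ (t : ℕ) (ht : t < parts.length), (parts.get ⟨t, ht⟩).length = 1 ∨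
      OccursBefore S (parts.get ⟨t, ht⟩) (phraseEnd parts t)) :
    ∀ t ≤ parts.length, phraseEnd parts t ≤ phraseEnd cs t
  | 0, _ => by simp [phraseEnd]
  | t + 1, ht => by
    have ht' : t < parts.length := ht
    by_cases htc : t < cs.length
    · rw [phraseEnd_succ parts t ht']
      exact hcs.add_length_le_phraseEnd_succ htc (hjoin ▸ occursAt_phraseEnd parts t ht')
        (hcs.phraseEnd_le_phraseEnd hjoin hblocks t ht'.le) (hblocks t ht')
    · rw [phraseEnd_of_length_le (bs := cs) (by omega), hcs.flatten_eq, ← hjoin]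
      exact phraseEnd_le_length_flatten parts _

theorem length_le (hcs : LZ77Parse S cs) {parts : List (List α)} (hjoin : parts.flatten = S)
    (hblocks : ∀ (t : ℕ) (ht : t < parts.length), (parts.get ⟨t, ht⟩).length = 1 ∨
      OccursBefore S (parts.get ⟨t, ht⟩) (phraseEnd parts t)) :
    cs.length ≤ parts.length := by
  by_contra! hlt
  have hdom := hcs.phraseEnd_le_phraseEnd hjoin hblocks parts.length le_rfl
  have hend := phraseEnd_le_length_flatten cs (parts.length + 1)
  rw [phraseEnd_of_length_le le_rfl, hjoin] at hdom
  rw [phraseEnd_succ cs _ hlt, hcs.flatten_eq] at hend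
  have hpos := hcs.length_pos hlt
  omega

end LZ77Parse

theorem lz77_le_twice_blocks_general {α : Type*} (S' : List α) (parts cs : List (List α))
    (hjoin : parts.flatten = S')
    (hblocks : ∀ (t : ℕ) (ht : t < parts.length),
      (parts.get ⟨t, ht⟩).length = 1 ∨
        ∃ j, occursAt S' (parts.get ⟨t, ht⟩) j ∧
          j + (parts.get ⟨t, ht⟩).length ≤ phraseEnd parts t)
    (hcs : LZ77Parse S' cs) :
    cs.length ≤ 2 * parts.length :=
  (hcs.length_le hjoin hblocks).trans (Nat.le_mul_of_pos_left _ two_pos)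

/-- If `S'` can be partitioned into `k` blocks, each of which is a single
character or occurs earlier in `S'` (entirely before its own position), then
the LZ77 parse of `S'` has at most `2 k` phrases. -/
theorem lz77_le_twice_blocks {α : Type*} (S' : List α) (parts cs : List (List α))
    (hjoin : parts.flatten = S') (hne : ∀ b ∈ parts, b ≠ [])
    (hblocks : ∀ (t : ℕ) (ht : t < parts.length),
      (parts.get ⟨t, ht⟩).length = 1 ∨
        ∃ j, occursAt S' (parts.get ⟨t, ht⟩) j ∧
          j + (parts.get ⟨t, ht⟩).length ≤ phraseEnd parts t)
    (hcs : LZ77Parse S' cs) :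
    cs.length ≤ 2 * parts.length :=
  lz77_le_twice_blocks_general S' parts cs hjoin hblocks hcs
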